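/- arXiv:2501.00931 — 7 statements merged into one kernel-verified Lean document; each statement's English description precedes it below -/
import Mathlib

section
/- Let p be a prime and let A be an F-finite Noetherian regular local ring of characteristic p with regular system of parameters x_1, …, x_N, let 1 ≤ r ≤ N, π = x_1 ⋯ x_r, and let A_π be the localization of A away from π. Let Ω¹_A(log π) ⊆ Ω¹_{A_π/𝔽_p} be the A-submodule generated by the image of Ω¹_{A/𝔽_p} together with dlog x_i := x_i^{-1}·d x_i for 1 ≤ i ≤ r. Let n_1, …, n_r be integers and let x = x_1^{n_1} ⋯ x_r^{n_r} ∈ A_π (integer powers taken in the units generated by the x_i). Then the A-submodule of Ω¹_{A_π/𝔽_p} generated by all elements (a·x^{-1})·ω with a ∈ A, ω ∈ Ω¹_A(log π), together with all elements d(a·x^{-1}) with a ∈ A, is equal to x^{-1}·Ω¹_A(log π), the set of x^{-1}-multiples of elements of Ω¹_A(log π). -/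
section DlogAux

variable (R : Type*) {S : Type*} [CommRing R] [CommRing S] [Algebra R S]

/-- `dlog` of a unit. -/
noncomputable def dlogfAux (v : Sˣ) : KaehlerDifferential R S :=
  ((v⁻¹ : Sˣ) : S) • KaehlerDifferential.D R S (v : S)

lemma D_coe_unit (v : Sˣ) :
    KaehlerDifferential.D R S (v : S) = (v : S) • dlogfAux R v := by
  rw [dlogfAux, smul_smul, Units.mul_inv, one_smul]

lemma dlogfAux_one : dlogfAux R (1 : Sˣ) = 0 := by
  simp [dlogfAux]

lemma dlogfAux_mul (v w : Sˣ) :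
    dlogfAux R (v * w) = dlogfAux R v + dlogfAux R w := by
  have hv : ((v⁻¹ : Sˣ) : S) * (v : S) = 1 := Units.inv_mul v
  have hw : ((w⁻¹ : Sˣ) : S) * (w : S) = 1 := Units.inv_mul w
  simp only [dlogfAux, mul_inv_rev, Units.val_mul, Derivation.leibniz, smul_add, smul_smul]
  rw [show ((w⁻¹ : Sˣ) : S) * ((v⁻¹ : Sˣ) : S) * (v : S) = ((w⁻¹ : Sˣ) : S) by
        rw [mul_assoc, hv, mul_one],
      show ((w⁻¹ : Sˣ) : S) * ((v⁻¹ : Sˣ) : S) * (w : S) = ((v⁻¹ : Sˣ) : S) by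
        rw [mul_comm ((w⁻¹ : Sˣ) : S), mul_assoc, hw, mul_one],
      add_comm]

/-- `dlog` as a monoid hom. -/
noncomputable def dlogHomAux : Sˣ →* Multiplicative (KaehlerDifferential R S) where
  toFun v := Multiplicative.ofAdd (dlogfAux R v)
  map_one' := congrArg Multiplicative.ofAdd (dlogfAux_one R)
  map_mul' v w := congrArg Multiplicative.ofAdd (dlogfAux_mul R v w)

lemma dlogfAux_zpow (v : Sˣ) (m : ℤ) : dlogfAux R (v ^ m) = m • dlogfAux R v := by
  have h := map_zpow (dlogHomAux R (S := S)) v m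
  have h2 := congrArg Multiplicative.toAdd h
  rw [toAdd_zpow] at h2
  exact h2

lemma dlogfAux_inv (v : Sˣ) : dlogfAux R v⁻¹ = - dlogfAux R v := by
  have h := map_inv (dlogHomAux R (S := S)) v
  have h2 := congrArg Multiplicative.toAdd h
  rw [toAdd_inv] at h2
  exact h2

lemma dlogfAux_prod {ι : Type*} (s : Finset ι) (f : ι → Sˣ) :
    dlogfAux R (∏ i ∈ s, f i) = ∑ i ∈ s, dlogfAux R (f i) := by
  classical
  induction s using Finset.cons_induction with
  | empty => simpa using dlogfAux_one R (S := S)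
  | cons a s ha ih =>
    rw [Finset.prod_cons, Finset.sum_cons, dlogfAux_mul, ih]

end DlogAux

/-- With `A` an `F`-finite Noetherian regular local ring of
characteristic `p`, regular system of parameters `x₁, …, x_N`, `1 ≤ r ≤ N`,
`π = x₁ ⋯ x_r`, `K = A_π`, and `Ω¹_A(log π) ⊆ Ω¹_{K/𝔽_p}` the `A`-submodule generated
by the image of `Ω¹_{A/𝔽_p}` together with the `dlog xᵢ` (`i ≤ r`): for integers
`n₁, …, n_r` and `x = x₁^{n₁} ⋯ x_r^{n_r}` (a unit of `K`), the `A`-submodule of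
`Ω¹_{K/𝔽_p}` generated by all `(a·x⁻¹)·ω` (`a ∈ A`, `ω ∈ Ω¹_A(log π)`) together with
all `d(a·x⁻¹)` (`a ∈ A`) equals `x⁻¹·Ω¹_A(log π)`, the set of `x⁻¹`-multiples of
elements of `Ω¹_A(log π)`. -/
theorem span_twisted_log_kaehler_eq_smul
    (p : ℕ) [Fact p.Prime]
    (A : Type*) [CommRing A] [IsNoetherianRing A] [IsLocalRing A]
    [CharP A p] [Algebra (ZMod p) A]
    (hF : (frobenius A p).Finite)
    (N : ℕ) (hdim : ringKrullDim A = N)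
    (x : Fin N → A)
    (hx : Ideal.span (Set.range x) = IsLocalRing.maximalIdeal A)
    (r : ℕ) (hr1 : 1 ≤ r) (hrN : r ≤ N)
    (K : Type*) [CommRing K] [Algebra A K] [Algebra (ZMod p) K]
    [IsScalarTower (ZMod p) A K] [SMulCommClass (ZMod p) A K]
    [IsLocalization.Away
      (∏ i ∈ Finset.univ.filter (fun i : Fin N => (i : ℕ) < r), x i) K]
    (dlog : Fin N → KaehlerDifferential (ZMod p) K)
    (hdlog : ∀ i : Fin N, dlog i =
      Ring.inverse (algebraMap A K (x i)) •
        KaehlerDifferential.D (ZMod p) K (algebraMap A K (x i)))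
    (Ωlog : Submodule A (KaehlerDifferential (ZMod p) K))
    (hΩlog : Ωlog = LinearMap.range (KaehlerDifferential.map (ZMod p) (ZMod p) A K) ⊔
      Submodule.span A {ω | ∃ i : Fin N, (i : ℕ) < r ∧ ω = dlog i})
    (n : Fin N → ℤ)
    (u : Fin N → Kˣ) (hu : ∀ i : Fin N, (i : ℕ) < r → (u i : K) = algebraMap A K (x i))
    (xu : Kˣ)
    (hxu : xu = ∏ i ∈ Finset.univ.filter (fun i : Fin N => (i : ℕ) < r), (u i) ^ (n i)) :
    (Submodule.span A
      ({ω | ∃ (a : A), ∃ η ∈ Ωlog, ω = (((xu⁻¹ : Kˣ) : K) * algebraMap A K a) • η} ∪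
       {ω | ∃ a : A, ω = KaehlerDifferential.D (ZMod p) K
          (((xu⁻¹ : Kˣ) : K) * algebraMap A K a)}) :
        Set (KaehlerDifferential (ZMod p) K)) =
    {ω | ∃ η ∈ Ωlog, ω = ((xu⁻¹ : Kˣ) : K) • η} := by
  classical
  have hAsmul : ∀ (a : A) (ω : KaehlerDifferential (ZMod p) K),
      a • ω = algebraMap A K a • ω := fun a ω => (algebraMap_smul K a ω).symm
  have hdlogf : ∀ i : Fin N, (i : ℕ) < r → dlogfAux (ZMod p) (u i) = dlog i := by
    intro i hir
    rw [hdlog i, ← hu i hir, dlogfAux]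
    rw [show Ring.inverse ((u i : K)) = (((u i)⁻¹ : Kˣ) : K) from Ring.inverse_unit (u i)]
  set c : K := ((xu⁻¹ : Kˣ) : K) with hc
  set θ : KaehlerDifferential (ZMod p) K :=
    ∑ i ∈ Finset.univ.filter (fun i : Fin N => (i : ℕ) < r), n i • dlog i with hθdef
  have hθlog : ∀ i : Fin N, (i : ℕ) < r → dlog i ∈ Ωlog := by
    intro i hir
    rw [hΩlog]
    exact le_sup_right (a := LinearMap.range (KaehlerDifferential.map (ZMod p) (ZMod p) A K))
      (Submodule.subset_span ⟨i, hir, rfl⟩)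
  have hθmem : θ ∈ Ωlog := Submodule.sum_mem _ fun i hi => by
    rw [← Int.cast_smul_eq_zsmul A]
    exact Ωlog.smul_mem _ (hθlog i (Finset.mem_filter.mp hi).2)
  have hdlogxu : dlogfAux (ZMod p) xu = θ := by
    rw [hxu, dlogfAux_prod]
    exact Finset.sum_congr rfl fun i hi => by
      rw [dlogfAux_zpow, hdlogf i (Finset.mem_filter.mp hi).2]
  have hDc : KaehlerDifferential.D (ZMod p) K c = c • (-θ) := by
    rw [hc, D_coe_unit (ZMod p) (xu⁻¹), dlogfAux_inv, hdlogxu]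
  let f : KaehlerDifferential (ZMod p) K →ₗ[A] KaehlerDifferential (ZMod p) K :=
    { toFun := fun ω => c • ω
      map_add' := fun ω₁ ω₂ => smul_add c ω₁ ω₂
      map_smul' := fun a ω => by
        simp only [RingHom.id_apply]
        rw [hAsmul a ω, hAsmul a (c • ω), smul_smul, smul_smul, mul_comm] }
  have hfapp : ∀ ω : KaehlerDifferential (ZMod p) K, f ω = c • ω := fun _ => rfl
  have hLeib : ∀ a : A, KaehlerDifferential.D (ZMod p) K (c * algebraMap A K a) =
      c • KaehlerDifferential.D (ZMod p) K (algebraMap A K a)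
        + (c * algebraMap A K a) • (-θ) := by
    intro a
    rw [Derivation.leibniz, hDc, smul_smul, mul_comm (algebraMap A K a) c]
  have key : Submodule.span A
      ({ω | ∃ (a : A), ∃ η ∈ Ωlog, ω = (c * algebraMap A K a) • η} ∪
       {ω | ∃ a : A, ω = KaehlerDifferential.D (ZMod p) K (c * algebraMap A K a)})
      = Ωlog.map f := by
    apply le_antisymm
    · rw [Submodule.span_le]
      rintro ω (⟨a, η, hη, rfl⟩ | ⟨a, rfl⟩)
      · exact ⟨a • η, Ωlog.smul_mem a hη, by
          rw [hfapp, hAsmul a η, smul_smul, mul_comm c]⟩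
      · refine ⟨KaehlerDifferential.D (ZMod p) K (algebraMap A K a) - a • θ, ?_, ?_⟩
        · apply Submodule.sub_mem
          · rw [hΩlog]
            exact le_sup_left
              (b := Submodule.span A {ω | ∃ i : Fin N, (i : ℕ) < r ∧ ω = dlog i})
              ⟨KaehlerDifferential.D (ZMod p) A a, KaehlerDifferential.map_D _ _ _ _ a⟩
          · exact Ωlog.smul_mem a hθmem
        · rw [hfapp, smul_sub, hAsmul a θ, smul_smul, hLeib a, smul_neg, sub_eq_add_neg]
    · rw [Submodule.map_le_iff_le_comap]
      refine hΩlog.trans_le (sup_le ?_ ?_)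
      · rw [LinearMap.range_eq_map, ← KaehlerDifferential.span_range_derivation (ZMod p) A,
          Submodule.map_span, Submodule.span_le]
        rintro ω ⟨_, ⟨a, rfl⟩, rfl⟩
        rw [SetLike.mem_coe, Submodule.mem_comap, hfapp, KaehlerDifferential.map_D]
        have hrw : c • KaehlerDifferential.D (ZMod p) K (algebraMap A K a) =
            KaehlerDifferential.D (ZMod p) K (c * algebraMap A K a)
              + (c * algebraMap A K a) • θ := by
          rw [hLeib a, smul_neg, add_assoc, neg_add_cancel, add_zero]
        rw [hrw]
        apply Submodule.add_mem
        · exact Submodule.subset_span (Or.inr ⟨a, rfl⟩)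
        · rw [hθdef, Finset.smul_sum]
          refine Submodule.sum_mem _ fun i hi => ?_
          rw [smul_comm (c * algebraMap A K a) (n i) (dlog i)]
          rw [← Int.cast_smul_eq_zsmul A]
          exact Submodule.smul_mem _ _ (Submodule.subset_span
            (Or.inl ⟨a, dlog i, hθlog i (Finset.mem_filter.mp hi).2, rfl⟩))
      · rw [Submodule.span_le]
        rintro ω ⟨i, hir, rfl⟩
        rw [SetLike.mem_coe, Submodule.mem_comap, hfapp]
        exact Submodule.subset_span (Or.inl ⟨1, dlog i, hθlog i hir, by simp⟩)
  have : (Submodule.span A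
      ({ω | ∃ (a : A), ∃ η ∈ Ωlog, ω = (c * algebraMap A K a) • η} ∪
       {ω | ∃ a : A, ω = KaehlerDifferential.D (ZMod p) K (c * algebraMap A K a)}) :
      Set (KaehlerDifferential (ZMod p) K)) = ↑(Ωlog.map f) := congrArg _ key
  rw [this]
  ext ω
  simp only [Submodule.map_coe, Set.mem_image, SetLike.mem_coe, Set.mem_setOf_eq, hfapp]
  constructor
  · rintro ⟨η, hη, rfl⟩; exact ⟨η, hη, rfl⟩
  · rintro ⟨η, hη, rfl⟩; exact ⟨η, hη, rfl⟩
end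

section
/- Let p be a prime, A an integral domain of characteristic p which is a unique factorization domain, K its fraction field, x ∈ K a nonzero element, and m ≥ 1 an integer. If a, b ∈ 𝕎 K both satisfy fil(x, m) (that is, for every j < m, x·(a.coeff j)^(p^(m−1−j)) and x·(b.coeff j)^(p^(m−1−j)) lie in the image of A in K), then a + b and a − b also satisfy fil(x, m). In particular, the set of Witt vectors satisfying fil(x, m) is an additive subgroup of 𝕎 K. -/
/-!
Choose `u` in an algebraic closure `L` of `K` with `u ^ p ^ (m - 1) = x`. Since `A` is integrally
closed, `x * a_j ^ p ^ (m - 1 - j) ∈ A` exactly when its `p ^ j`-th power is integral over `A`,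
i.e. when `u ^ p ^ j * a_j` is. These are the coordinates of `[u] * a`, so `fil(x, m)` is the
preimage, under the additive map `a ↦ [u] * a`, of the Witt vectors over `L` whose first `m`
coordinates lie in the integral closure of `A`; and those form a subring of `𝕎 L`.
-/

/-- The Brylinski–Kato filtration condition on (truncated) Witt vectors, in Witt
coordinates: `a ∈ 𝕎 K` satisfies `fil(x, m)` if for every `j < m` the element
`x * (a.coeff j) ^ (p ^ (m - 1 - j))` lies in the image of `A` in `K`. -/
def WittFil (p : ℕ) [Fact p.Prime] (A : Type*) {K : Type*} [CommRing A] [CommRing K]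
    [Algebra A K] (x : K) (m : ℕ) (a : WittVector p K) : Prop :=
  ∀ j < m, x * a.coeff j ^ p ^ (m - 1 - j) ∈ Set.range (algebraMap A K)

namespace WittVector

open MvPolynomial

variable {p : ℕ} [Fact p.Prime]

theorem ghostComponent_mk_pow_mul {R : Type*} [CommRing R] (u : R) (c : WittVector p R) (n : ℕ) :
    ghostComponent n (mk p fun k => u ^ p ^ k * c.coeff k) = u ^ p ^ n * ghostComponent n c := by
  rw [ghostComponent_apply, ghostComponent_apply, aeval_wittPolynomial, aeval_wittPolynomial,
    Finset.mul_sum]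
  refine Finset.sum_congr rfl fun i hi => ?_
  have hin : i ≤ n := Nat.lt_succ_iff.mp (Finset.mem_range.mp hi)
  rw [coeff_mk, mul_pow, ← pow_mul, ← pow_add, Nat.add_sub_cancel' hin]
  ring

theorem map_mk_pow_mul {R S : Type*} [CommRing R] [CommRing S] (f : R →+* S) (u : R)
    (c : WittVector p R) :
    map f (mk p fun k => u ^ p ^ k * c.coeff k) =
      mk p fun k => f u ^ p ^ k * (map f c).coeff k := by
  ext n
  simp only [map_coeff, coeff_mk, map_mul, map_pow]

theorem teichmuller_mul_eq_mk_of_invertible {R : Type*} [CommRing R] [Invertible (p : R)]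
    (u : R) (c : WittVector p R) : teichmuller p u * c = mk p fun k => u ^ p ^ k * c.coeff k := by
  apply (ghostMap.bijective_of_invertible p R).1
  ext n
  rw [ghostMap_apply, ghostMap_apply, ghostComponent_mk_pow_mul, map_mul,
    ghostComponent_teichmuller]

/-- The universal case: over `ℤ`-polynomials, which embed into `ℚ`-polynomials where `p` is
invertible; the general case is its image under `counit`. -/
theorem teichmuller_mul_eq_mk {R : Type*} [CommRing R] (u : R) (c : WittVector p R) :
    teichmuller p u * c = mk p fun k => u ^ p ^ k * c.coeff k := by
  have universal (U : MvPolynomial R ℤ) (C : WittVector p (MvPolynomial R ℤ)) :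
      teichmuller p U * C = mk p fun k => U ^ p ^ k * C.coeff k := by
    refine map_injective (MvPolynomial.map (Int.castRingHom ℚ))
      (MvPolynomial.map_injective _ Int.cast_injective) ?_
    rw [map_mul, map_teichmuller, map_mk_pow_mul, teichmuller_mul_eq_mk_of_invertible]
  have hc : map (counit R) (mk p fun k => X (c.coeff k)) = c := by
    ext k
    rw [map_coeff, coeff_mk, counit_X]
  rw [← counit_X (R := R) u, ← hc, ← map_teichmuller, ← map_mul, universal, map_mk_pow_mul]

theorem teichmuller_mul_coeff {R : Type*} [CommRing R] (u : R) (c : WittVector p R) (n : ℕ) :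
    (teichmuller p u * c).coeff n = u ^ p ^ n * c.coeff n := by
  rw [teichmuller_mul_eq_mk, coeff_mk]

variable {L : Type*} [CommRing L]

variable (p) in
noncomputable def coeffMemSubring (B : Subring L) (m : ℕ) : Subring (WittVector p L) :=
  ((truncate m).comp (map B.subtype)).range.comap (truncate m)

theorem mem_coeffMemSubring {B : Subring L} {m : ℕ} {c : WittVector p L} :
    c ∈ coeffMemSubring p B m ↔ ∀ j < m, c.coeff j ∈ B := by
  refine ⟨?_, fun hc => ?_⟩
  · rintro ⟨c', hc'⟩ j hj
    have := congrArg (TruncatedWittVector.coeff ⟨j, hj⟩) hc'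
    rw [RingHom.comp_apply, coeff_truncate, coeff_truncate, map_coeff] at this
    exact this ▸ (c'.coeff j).2
  · refine ⟨mk p fun n => if h : n < m then ⟨c.coeff n, hc n h⟩ else 0, ?_⟩
    ext ⟨j, hj⟩
    rw [RingHom.comp_apply, coeff_truncate, coeff_truncate, map_coeff, coeff_mk, dif_pos hj]
    rfl

end WittVector

theorem mem_range_algebraMap_iff_isIntegral_mul
    {A K L : Type*} [CommRing A] [IsIntegrallyClosed A] [Field K] [Algebra A K]
    [IsFractionRing A K] [CommRing L] [Nontrivial L] [Algebra K L] [Algebra A L]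
    [IsScalarTower A K L]
    {q : ℕ} (hq : 0 < q) {x : K} {u : L} {m j : ℕ} (hu : u ^ q ^ (m - 1) = algebraMap K L x)
    (hj : j < m) (k : K) :
    x * k ^ q ^ (m - 1 - j) ∈ Set.range (algebraMap A K) ↔
      IsIntegral A (u ^ q ^ j * algebraMap K L k) := by
  have hpow : (u ^ q ^ j * algebraMap K L k) ^ q ^ (m - 1) =
      algebraMap K L ((x * k ^ q ^ (m - 1 - j)) ^ q ^ j) := by
    have hexp : q ^ (m - 1 - j) * q ^ j = q ^ (m - 1) := by
      rw [← pow_add, Nat.sub_add_cancel (Nat.le_sub_one_of_lt hj)]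
    rw [mul_pow, ← pow_mul, mul_comm (q ^ j), pow_mul, hu, mul_pow, ← pow_mul, hexp, map_mul,
      map_pow, map_pow]
  rw [← IsIntegral.pow_iff (pow_pos hq (m - 1)), hpow,
    isIntegral_algebraMap_iff (algebraMap K L).injective, IsIntegral.pow_iff (pow_pos hq j),
    IsIntegrallyClosed.isIntegral_iff]
  rfl

theorem wittFil_iff_teichmuller_mul_mem {p : ℕ} [Fact p.Prime]
    {A K L : Type*} [CommRing A] [IsIntegrallyClosed A] [Field K] [Algebra A K]
    [IsFractionRing A K] [CommRing L] [Nontrivial L] [Algebra K L] [Algebra A L]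
    [IsScalarTower A K L]
    {x : K} {u : L} {m : ℕ} (hu : u ^ p ^ (m - 1) = algebraMap K L x) (a : WittVector p K) :
    WittFil p A x m a ↔ WittVector.teichmuller p u * WittVector.map (algebraMap K L) a ∈
      WittVector.coeffMemSubring p (integralClosure A L).toSubring m := by
  rw [WittVector.mem_coeffMemSubring]
  refine forall₂_congr fun j hj => ?_
  rw [WittVector.teichmuller_mul_coeff, WittVector.map_coeff,
    mem_range_algebraMap_iff_isIntegral_mul (Fact.out : p.Prime).pos hu hj]
  rfl

theorem wittFil_add_sub_mem_general
    (p : ℕ) [Fact p.Prime]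
    (A : Type*) [CommRing A] [IsDomain A] [UniqueFactorizationMonoid A]
    (K : Type*) [Field K] [Algebra A K] [IsFractionRing A K]
    (x : K) (m : ℕ) :
    (∀ a b : WittVector p K, WittFil p A x m a → WittFil p A x m b →
      WittFil p A x m (a + b) ∧ WittFil p A x m (a - b)) ∧
    ∃ H : AddSubgroup (WittVector p K), ∀ c : WittVector p K,
      c ∈ H ↔ WittFil p A x m c := by
  obtain ⟨u, hu⟩ := IsAlgClosed.exists_pow_nat_eq (algebraMap K (AlgebraicClosure K) x)
    (pow_pos (Fact.out : p.Prime).pos (m - 1))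
  let φ : WittVector p K →+ WittVector p (AlgebraicClosure K) :=
    (AddMonoidHom.mulLeft (WittVector.teichmuller p u)).comp
      (WittVector.map (algebraMap K (AlgebraicClosure K))).toAddMonoidHom
  let H : AddSubgroup (WittVector p K) := AddSubgroup.comap φ <| Subring.toAddSubgroup <|
    WittVector.coeffMemSubring p (integralClosure A (AlgebraicClosure K)).toSubring m
  have hH (c : WittVector p K) : c ∈ H ↔ WittFil p A x m c :=
    (wittFil_iff_teichmuller_mul_mem hu c).symm
  refine ⟨fun a b ha hb => ?_, H, hH⟩
  rw [← hH] at ha hb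
  exact ⟨(hH _).1 (H.add_mem ha hb), (hH _).1 (H.sub_mem ha hb)⟩

/-- Let `A` be an integral domain of characteristic `p` which is a UFD,
`K` its fraction field, `x ∈ K` nonzero and `m ≥ 1`.  If `a, b ∈ 𝕎 K` both satisfy
`fil(x, m)`, then so do `a + b` and `a - b`; in particular the Witt vectors satisfying
`fil(x, m)` form an additive subgroup of `𝕎 K`. -/
theorem wittFil_add_sub_mem
    (p : ℕ) [Fact p.Prime]
    (A : Type*) [CommRing A] [IsDomain A] [CharP A p] [UniqueFactorizationMonoid A]
    (K : Type*) [Field K] [Algebra A K] [IsFractionRing A K]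
    (x : K) (hx : x ≠ 0) (m : ℕ) (hm : 1 ≤ m) :
    (∀ a b : WittVector p K, WittFil p A x m a → WittFil p A x m b →
      WittFil p A x m (a + b) ∧ WittFil p A x m (a - b)) ∧
    ∃ H : AddSubgroup (WittVector p K), ∀ c : WittVector p K,
      c ∈ H ↔ WittFil p A x m c :=
  wittFil_add_sub_mem_general p A K x m
end

section
/- Let p be a prime, A an integral domain of characteristic p which is a unique factorization domain, and K its fraction field. Let ξ_1, …, ξ_r be pairwise non-associated prime elements of A, let n_1, …, n_r be integers, and set x = ∏_t ξ_t^{n_t} and x' = ∏_t ξ_t^{⌊n_t/p⌋} in K (integer powers taken in K). Let m ≥ 2. Then: (i) every a ∈ 𝕎 K satisfying fil(x, m) also satisfies fil(x', m−1), i.e. for all j < m−1, x'·(a.coeff j)^(p^(m−2−j)) lies in the image of A; (ii) conversely, for every b ∈ 𝕎 K satisfying fil(x', m−1) there exists a ∈ 𝕎 K satisfying fil(x, m) with a.coeff j = b.coeff j for all j < m−1; and (iii) if a ∈ 𝕎 K satisfies fil(x, m) and a.coeff j = 0 for all j < m−1, then x·(a.coeff (m−1)) lies in the image of A. (This expresses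 the short exact sequence 0 → fil_D O_U → fil_D W_m O_U → fil_{D/p} W_{m−1} O_U → 0 relating the restriction map R and V^{m−1}.) -/
/-!
Write `n_t = p ⌊n_t / p⌋ + s_t` with `0 ≤ s_t < p`. Then `x = x'^p e` with
`e = ∏ ξ_t ^ s_t ∈ A`, and since the `ξ_t` are pairwise non-associated primes, no `p`-th power
of a prime divides `e`. Hence `x y^p ∈ A ↔ x' y ∈ A` for every `y ∈ K`: writing `x' y` in lowest
terms, a prime factor `π` of its denominator would give `π^p ∣ e`. As
`p^(m-1-j) = p · p^(m-2-j)` for `j < m - 1`, this equivalence applied to `y = a_j^(p^(m-2-j))`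
gives (i) and (ii), where `b` is lifted by setting the coefficient `m - 1` to zero; (iii) is the
condition on the coefficient `m - 1` in `fil(x, m)`.
-/

theorem zpow_eq_zpow_fdiv_pow_mul_pow_fmod {G : Type*} [GroupWithZero G] {u : G} (hu : u ≠ 0)
    (n : ℤ) {p : ℕ} (hp : 0 < p) :
    u ^ n = (u ^ n.fdiv p) ^ p * u ^ (n.fmod p).toNat := by
  have hfmod : ((n.fmod p).toNat : ℤ) = n.fmod p :=
    Int.toNat_of_nonneg (Int.fmod_nonneg_of_pos n (by exact_mod_cast hp))
  rw [← zpow_natCast, ← zpow_natCast, ← zpow_mul, ← zpow_add₀ hu, hfmod, Int.fdiv_mul_add_fmod]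

theorem not_prime_pow_dvd_prod_pow {M ι : Type*} [CommMonoidWithZero M] [IsCancelMulZero M]
    (s : Finset ι) {ξ : ι → M} (hprime : ∀ t, Prime (ξ t))
    (hassoc : ∀ t t', t ≠ t' → ¬ Associated (ξ t) (ξ t')) {p : ℕ} (hp : 0 < p) {k : ι → ℕ}
    (hk : ∀ t, k t < p) {π : M} (hπ : Prime π) :
    ¬ π ^ p ∣ ∏ t ∈ s, ξ t ^ k t := by
  classical
  intro hdvd
  obtain ⟨t, ht, hπt⟩ := hπ.exists_mem_finset_dvd ((dvd_pow_self π hp.ne').trans hdvd)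
  have hπξ : Associated π (ξ t) := hπ.associated_of_dvd (hprime t) (hπ.dvd_of_dvd_pow hπt)
  have hξ_rest : ¬ ξ t ∣ ∏ u ∈ s.erase t, ξ u ^ k u := fun h => by
    obtain ⟨u, hu, hξu⟩ := (hprime t).exists_mem_finset_dvd h
    exact hassoc t u (Finset.ne_of_mem_erase hu).symm
      ((hprime t).associated_of_dvd (hprime u) ((hprime t).dvd_of_dvd_pow hξu))
  rw [← Finset.mul_prod_erase s _ ht, (hπξ.pow_pow (n := p)).dvd_iff_dvd_left] at hdvd
  have hξξ := (hprime t).pow_dvd_of_dvd_mul_right p hξ_rest hdvd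
  exact (hk t).not_ge ((pow_dvd_pow_iff (hprime t).ne_zero (hprime t).not_isUnit).mp hξξ)

section FractionField

variable {A : Type*} [CommRing A] [IsDomain A] [UniqueFactorizationMonoid A]
  {K : Type*} [Field K] [Algebra A K] [IsFractionRing A K]

theorem mem_range_algebraMap_of_pow_mul_mem {p : ℕ} {e : A}
    (he : ∀ π : A, Prime π → ¬ π ^ p ∣ e) {z : K}
    (h : z ^ p * algebraMap A K e ∈ Set.range (algebraMap A K)) :
    z ∈ Set.range (algebraMap A K) := by
  obtain ⟨w, hw⟩ := h
  set a := IsFractionRing.num A z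
  set b : A := ↑(IsFractionRing.den A z)
  have hb : b ≠ 0 := nonZeroDivisors.coe_ne_zero _
  refine IsFractionRing.isInteger_of_isUnit_den (not_not.mp fun hb_unit => ?_)
  obtain ⟨π, hπ_irr, hπb⟩ := WfDvdMonoid.exists_irreducible_factor hb_unit hb
  have hπ : Prime π := UniqueFactorizationMonoid.irreducible_iff_prime.mp hπ_irr
  have hπa : ¬ π ∣ a := fun hπa => hπ.not_isUnit (IsFractionRing.num_den_reduced A z hπa hπb)
  have hnum_den : a ^ p * e = w * b ^ p := by
    apply IsFractionRing.injective A K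
    have hz : algebraMap A K a = z * algebraMap A K b := by
      rw [← IsFractionRing.mk'_num_den' A z, div_mul_cancel₀ _ (by simp)]
    rw [map_mul, map_mul, map_pow, map_pow, hz, hw]
    ring
  have hπp : π ^ p ∣ a ^ p * e := hnum_den ▸ (pow_dvd_pow_of_dvd hπb p).mul_left w
  exact he π hπ (hπ.pow_dvd_of_dvd_mul_left p (mt hπ.dvd_of_dvd_pow hπa) hπp)

theorem mul_pow_mem_range_iff {p : ℕ} {e : A} (he : ∀ π : A, Prime π → ¬ π ^ p ∣ e)
    {x x' : K} (hxe : x = x' ^ p * algebraMap A K e) (y : K) :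
    x * y ^ p ∈ Set.range (algebraMap A K) ↔ x' * y ∈ Set.range (algebraMap A K) := by
  have hx : x * y ^ p = (x' * y) ^ p * algebraMap A K e := by rw [hxe]; ring
  refine ⟨fun h => mem_range_algebraMap_of_pow_mul_mem he (hx ▸ h), ?_⟩
  rintro ⟨w, hw⟩
  exact ⟨w ^ p * e, by rw [hx, map_mul, map_pow, hw]⟩

end FractionField

theorem pow_pow_sub_eq_pow_pow_pred_sub {M : Type*} [Monoid M] (y : M) (p : ℕ) {m j : ℕ}
    (hj : j < m - 1) : y ^ p ^ (m - 1 - j) = (y ^ p ^ (m - 1 - 1 - j)) ^ p := by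
  rw [← pow_mul, ← pow_succ]
  congr 2
  omega

namespace WittFil

variable {p : ℕ} [Fact p.Prime] {A K : Type*} [CommRing A] [CommRing K] [Algebra A K]
  {x x' : K} {m : ℕ}

theorem restrict
    (h : ∀ y : K, x * y ^ p ∈ Set.range (algebraMap A K) → x' * y ∈ Set.range (algebraMap A K))
    {a : WittVector p K} (ha : WittFil p A x m a) : WittFil p A x' (m - 1) a := by
  intro j hj
  apply h
  rw [← pow_pow_sub_eq_pow_pow_pred_sub _ _ hj]
  exact ha j (by omega)

theorem exists_lift
    (h : ∀ y : K, x' * y ∈ Set.range (algebraMap A K) → x * y ^ p ∈ Set.range (algebraMap A K))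
    {b : WittVector p K} (hb : WittFil p A x' (m - 1) b) :
    ∃ a : WittVector p K, WittFil p A x m a ∧ ∀ j < m - 1, a.coeff j = b.coeff j := by
  refine ⟨WittVector.mk p fun j => if j < m - 1 then b.coeff j else 0, fun j hj => ?_,
    fun j hj => if_pos hj⟩
  rw [WittVector.coeff_mk]
  split_ifs with hjm
  · rw [pow_pow_sub_eq_pow_pow_pred_sub _ _ hjm]
    exact h _ (hb j hjm)
  · rw [zero_pow (pow_ne_zero _ (Fact.out : p.Prime).ne_zero), mul_zero]
    exact ⟨0, map_zero _⟩

end WittFil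

theorem wittFil_restriction_exact_sequence_general
    (p : ℕ) [Fact p.Prime]
    (A : Type*) [CommRing A] [IsDomain A] [UniqueFactorizationMonoid A]
    (K : Type*) [Field K] [Algebra A K] [IsFractionRing A K]
    (r : ℕ) (ξ : Fin r → A)
    (hprime : ∀ t, Prime (ξ t))
    (hassoc : ∀ t t', t ≠ t' → ¬ Associated (ξ t) (ξ t'))
    (n : Fin r → ℤ)
    (x x' : K)
    (hx : x = ∏ t, (algebraMap A K (ξ t)) ^ (n t))
    (hx' : x' = ∏ t, (algebraMap A K (ξ t)) ^ (Int.fdiv (n t) p))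
    (m : ℕ) (hm : 2 ≤ m) :
    (∀ a : WittVector p K, WittFil p A x m a → WittFil p A x' (m - 1) a) ∧
    (∀ b : WittVector p K, WittFil p A x' (m - 1) b →
      ∃ a : WittVector p K, WittFil p A x m a ∧ ∀ j < m - 1, a.coeff j = b.coeff j) ∧
    (∀ a : WittVector p K, WittFil p A x m a → (∀ j < m - 1, a.coeff j = 0) →
      x * a.coeff (m - 1) ∈ Set.range (algebraMap A K)) := by
  have hp : 0 < p := (Fact.out : p.Prime).pos
  have hfmod_lt : ∀ t, ((n t).fmod p).toNat < p := fun t => by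
    have := Int.fmod_lt_of_pos (n t) (by exact_mod_cast hp : (0 : ℤ) < p)
    omega
  have he : ∀ π : A, Prime π → ¬ π ^ p ∣ ∏ t, ξ t ^ ((n t).fmod p).toNat :=
    fun π hπ => not_prime_pow_dvd_prod_pow _ hprime hassoc hp hfmod_lt hπ
  have hxe : x = x' ^ p * algebraMap A K (∏ t, ξ t ^ ((n t).fmod p).toNat) := by
    rw [hx, hx', map_prod, ← Finset.prod_pow, ← Finset.prod_mul_distrib]
    refine Finset.prod_congr rfl fun t _ => ?_
    rw [map_pow]
    exact zpow_eq_zpow_fdiv_pow_mul_pow_fmod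
      ((map_ne_zero_iff _ (IsFractionRing.injective A K)).mpr (hprime t).ne_zero) (n t) hp
  have hiff := mul_pow_mem_range_iff he hxe
  refine ⟨fun a => WittFil.restrict fun y => (hiff y).1,
    fun b => WittFil.exists_lift fun y => (hiff y).2, fun a ha _ => ?_⟩
  simpa using ha (m - 1) (by omega)

/-- Let `A` be a UFD of characteristic `p` with fraction field `K`,
`ξ₁, …, ξ_r` pairwise non-associated primes of `A`, `n₁, …, n_r ∈ ℤ`,
`x = ∏ ξ_t ^ n_t` and `x' = ∏ ξ_t ^ ⌊n_t/p⌋`, and `m ≥ 2`.  Then: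
(i) every `a` satisfying `fil(x, m)` satisfies `fil(x', m-1)`;
(ii) every `b` satisfying `fil(x', m-1)` lifts to some `a` satisfying `fil(x, m)`
whose first `m-1` coefficients agree with those of `b`; and
(iii) if `a` satisfies `fil(x, m)` and `a.coeff j = 0` for all `j < m-1`, then
`x * a.coeff (m-1)` lies in the image of `A`. -/
theorem wittFil_restriction_exact_sequence
    (p : ℕ) [Fact p.Prime]
    (A : Type*) [CommRing A] [IsDomain A] [CharP A p] [UniqueFactorizationMonoid A]
    (K : Type*) [Field K] [Algebra A K] [IsFractionRing A K]
    (r : ℕ) (ξ : Fin r → A)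
    (hprime : ∀ t, Prime (ξ t))
    (hassoc : ∀ t t', t ≠ t' → ¬ Associated (ξ t) (ξ t'))
    (n : Fin r → ℤ)
    (x x' : K)
    (hx : x = ∏ t, (algebraMap A K (ξ t)) ^ (n t))
    (hx' : x' = ∏ t, (algebraMap A K (ξ t)) ^ (Int.fdiv (n t) p))
    (m : ℕ) (hm : 2 ≤ m) :
    (∀ a : WittVector p K, WittFil p A x m a → WittFil p A x' (m - 1) a) ∧
    (∀ b : WittVector p K, WittFil p A x' (m - 1) b →
      ∃ a : WittVector p K, WittFil p A x m a ∧ ∀ j < m - 1, a.coeff j = b.coeff j) ∧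
    (∀ a : WittVector p K, WittFil p A x m a → (∀ j < m - 1, a.coeff j = 0) →
      x * a.coeff (m - 1) ∈ Set.range (algebraMap A K)) :=
  wittFil_restriction_exact_sequence_general p A K r ξ hprime hassoc n x x' hx hx' m hm
end

section
/- Let p be a prime, A an integral domain of characteristic p which is a unique factorization domain, K its fraction field, x and y nonzero elements of K, and m ≥ 1. If a ∈ 𝕎 K satisfies fil(x, m) and b ∈ 𝕎 K satisfies fil(y, m), then the Witt vector product a·b satisfies fil(x·y, m), i.e. for every j < m the element (x·y)·((a·b).coeff j)^(p^(m−1−j)) lies in the image of A in K. In particular (taking y = 1), the set of Witt vectors satisfying fil(x, m) is stable under multiplication by elements of the image of 𝕎 A in 𝕎 K. -/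
open MvPolynomial Finset

theorem myIsWeightedHomogeneous_rename {σ τ R M : Type*} [CommSemiring R] [AddCommMonoid M]
    {w : τ → M} {f : σ → τ} {φ : MvPolynomial σ R} {n : M}
    (h : φ.IsWeightedHomogeneous (w ∘ f) n) :
    (rename f φ).IsWeightedHomogeneous w n := by
  intro d hd
  obtain ⟨u, rfl, hu⟩ := coeff_rename_ne_zero f φ d hd
  rw [← h hu]
  rw [Finsupp.weight_apply, Finsupp.weight_apply]
  exact Finsupp.sum_mapDomain_index (fun a => zero_smul _ _) (fun a b₁ b₂ => add_smul _ _ _)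

theorem myIsWeightedHomogeneous_zeroweight {σ R M : Type*} [CommSemiring R] [AddCommMonoid M]
    (φ : MvPolynomial σ R) :
    φ.IsWeightedHomogeneous (fun _ => (0 : M)) 0 := by
  intro d _
  simp [Finsupp.weight_apply]

theorem myIsWeightedHomogeneous_pow {σ R M : Type*} [CommSemiring R] [AddCommMonoid M]
    {w : σ → M} {φ : MvPolynomial σ R} {n : M} (h : φ.IsWeightedHomogeneous w n) (k : ℕ) :
    (φ ^ k).IsWeightedHomogeneous w (k • n) := by
  induction k with
  | zero => simpa using isWeightedHomogeneous_one R w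
  | succ k ih =>
    have := ih.mul h
    rw [← pow_succ] at this
    convert this using 1
    rw [succ_nsmul]

variable {p : ℕ} [hp : Fact p.Prime]

theorem wittPolynomial_isWeightedHomogeneous (n : ℕ) :
    (wittPolynomial p ℚ n).IsWeightedHomogeneous (fun i => p ^ i) (p ^ n) := by
  unfold wittPolynomial
  apply IsWeightedHomogeneous.sum
  intro i hi
  apply isWeightedHomogeneous_monomial
  rw [Finsupp.weight_apply, Finsupp.sum_single_index, smul_eq_mul, ← pow_add]
  · congr 1
    rw [mem_range] at hi
    omega
  · exact zero_smul _ _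

/-- weight function: weight `p^i` on variables `(b, i)`, zero on others. -/
def wtb (p : ℕ) (b : Fin 2) : Fin 2 × ℕ → ℕ := fun v => if v.1 = b then p ^ v.2 else 0

theorem wittStructureRat_mul_isWeightedHomogeneous (b : Fin 2) (n : ℕ) :
    (wittStructureRat p (X 0 * X 1 : MvPolynomial (Fin 2) ℚ) n).IsWeightedHomogeneous
      (wtb p b) (p ^ n) := by
  induction n using Nat.strong_induction_on with | h n IH => ?_
  rw [wittStructureRat_rec]
  have h0 : (0 : ℕ) + p ^ n = p ^ n := zero_add _
  rw [← h0]
  apply (isWeightedHomogeneous_C (wtb p b) _).mul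
  rw [← mem_weightedHomogeneousSubmodule]
  apply sub_mem
  · -- Φ part
    rw [mem_weightedHomogeneousSubmodule]
    rw [map_mul, bind₁_X_right, bind₁_X_right]
    have hW : ∀ b' : Fin 2,
        (rename (Prod.mk b') (wittPolynomial p ℚ n)).IsWeightedHomogeneous (wtb p b)
          (if b' = b then p ^ n else 0) := by
      intro b'
      apply myIsWeightedHomogeneous_rename
      by_cases hbb : b' = b
      · subst hbb
        simp only [if_pos rfl]
        have hfun : (wtb p b') ∘ (Prod.mk b') = fun i : ℕ => p ^ i := by
          funext i; simp [wtb]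
        rw [hfun]
        exact wittPolynomial_isWeightedHomogeneous n
      · simp only [if_neg hbb]
        have hfun : (wtb p b) ∘ (Prod.mk b') = fun _ : ℕ => (0 : ℕ) := by
          funext i; simp [wtb, hbb]
        rw [hfun]
        exact myIsWeightedHomogeneous_zeroweight _
    fin_cases b
    · have := (hW 0).mul (hW 1)
      simpa using this
    · have := (hW 0).mul (hW 1)
      simpa using this
  · rw [mem_weightedHomogeneousSubmodule]
    apply IsWeightedHomogeneous.sum
    intro i hi
    rw [mem_range] at hi
    have h0' : (0 : ℕ) + p ^ n = p ^ n := zero_add _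
    rw [← h0']
    apply (isWeightedHomogeneous_C (wtb p b) _).mul
    have := myIsWeightedHomogeneous_pow (IH i hi) (p ^ (n - i))
    convert this using 1
    rw [smul_eq_mul, ← pow_add]
    congr 1
    omega

theorem wittMul_isWeightedHomogeneous (b : Fin 2) (n : ℕ) :
    (WittVector.wittMul p n).IsWeightedHomogeneous (wtb p b) (p ^ n) := by
  intro d hd
  apply wittStructureRat_mul_isWeightedHomogeneous b n
  have : map (Int.castRingHom ℚ) (WittVector.wittMul p n)
      = wittStructureRat p (X 0 * X 1 : MvPolynomial (Fin 2) ℚ) n := by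
    rw [WittVector.wittMul, map_wittStructureInt]
    congr 1
    simp
  rw [← this, coeff_map]
  simpa using hd

section Integrality

variable {A K : Type*} [CommRing A] [IsDomain A] [UniqueFactorizationMonoid A]
  [Field K] [Algebra A K] [IsFractionRing A K]

theorem mem_range_of_pow_mem {z : K} {n : ℕ} (hn : n ≠ 0)
    (h : z ^ n ∈ Set.range (algebraMap A K)) : z ∈ Set.range (algebraMap A K) := by
  obtain ⟨c, hc⟩ := h
  have hint : IsIntegral A z := by
    refine ⟨Polynomial.X ^ n - Polynomial.C c, Polynomial.monic_X_pow_sub_C c hn, ?_⟩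
    simp [Polynomial.eval₂_sub, hc]
  obtain ⟨y, hy⟩ := IsIntegrallyClosed.isIntegral_iff.mp hint
  exact ⟨y, hy⟩

theorem keyS {x : K} (hx : x ≠ 0) {N : ℕ} (hN : N ≠ 0) {z1 z2 : K} {i : ℕ} (hi : i ≤ N)
    (h1 : x * z1 ^ N ∈ Set.range (algebraMap A K))
    (h2 : x * z2 ^ N ∈ Set.range (algebraMap A K)) :
    x * (z1 ^ i * z2 ^ (N - i)) ∈ Set.range (algebraMap A K) := by
  apply mem_range_of_pow_mem hN
  have key : (x * (z1 ^ i * z2 ^ (N - i))) ^ N = (x * z1 ^ N) ^ i * (x * z2 ^ N) ^ (N - i) := by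
    have hxN : x ^ N = x ^ i * x ^ (N - i) := by rw [← pow_add, Nat.add_sub_cancel' hi]
    rw [mul_pow, mul_pow, mul_pow, mul_pow, ← pow_mul z1, ← pow_mul z2, ← pow_mul z1,
      ← pow_mul z2, hxN, Nat.mul_comm i N, Nat.mul_comm (N - i) N]
    ring
  rw [key]
  obtain ⟨c1, hc1⟩ := h1
  obtain ⟨c2, hc2⟩ := h2
  exact ⟨c1 ^ i * c2 ^ (N - i), by rw [map_mul, map_pow, map_pow, hc1, hc2]⟩

theorem keyS_add {x : K} (hx : x ≠ 0) {N : ℕ} (hN : N ≠ 0) {z1 z2 : K}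
    (h1 : x * z1 ^ N ∈ Set.range (algebraMap A K))
    (h2 : x * z2 ^ N ∈ Set.range (algebraMap A K)) :
    x * (z1 + z2) ^ N ∈ Set.range (algebraMap A K) := by
  rw [add_pow, Finset.mul_sum]
  have : ∀ z : K, z ∈ Set.range (algebraMap A K) ↔ z ∈ (algebraMap A K).range := by
    intro z; rfl
  rw [this]
  apply Subring.sum_mem
  intro i hi
  rw [Finset.mem_range] at hi
  have hmem : x * (z1 ^ i * z2 ^ (N - i)) ∈ (algebraMap A K).range := by
    rw [← this]
    exact keyS hx hN (by omega) h1 h2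
  have : x * (z1 ^ i * z2 ^ (N - i) * (N.choose i : K))
      = (N.choose i : K) * (x * (z1 ^ i * z2 ^ (N - i))) := by ring
  rw [this]
  apply Subring.mul_mem
  · exact ⟨(N.choose i : A), by simp⟩
  · exact hmem

end Integrality

section KeyA

variable {A K : Type*} [CommRing A] [IsDomain A] [UniqueFactorizationMonoid A]
  [Field K] [Algebra A K] [IsFractionRing A K]

theorem keyA {p : ℕ} (hp : 1 < p) {x : K} {m j : ℕ} (hj : j < m) (c : ℕ → K)
    (hc : ∀ i < m, x * c i ^ p ^ (m - 1 - i) ∈ Set.range (algebraMap A K))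
    {ι : Type*} (t : Finset ι) (g : ι → ℕ) (e : ι → ℕ) (he : ∀ v ∈ t, e v ≠ 0)
    (hsum : ∑ v ∈ t, e v * p ^ g v = p ^ j) :
    x * (∏ v ∈ t, c (g v) ^ e v) ^ p ^ (m - 1 - j) ∈ Set.range (algebraMap A K) := by
  have hp0 : p ≠ 0 := by omega
  apply mem_range_of_pow_mem (pow_ne_zero j hp0)
  have hg : ∀ v ∈ t, g v ≤ j := by
    intro v hv
    by_contra hgt
    push_neg at hgt
    have h1 : p ^ j < p ^ g v := Nat.pow_lt_pow_right hp hgt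
    have h1' : p ^ g v ≤ e v * p ^ g v :=
      Nat.le_mul_of_pos_left _ (Nat.pos_of_ne_zero (he v hv))
    have h2 : e v * p ^ g v ≤ p ^ j :=
      hsum ▸ Finset.single_le_sum (f := fun v => e v * p ^ g v) (fun _ _ => Nat.zero_le _) hv
    omega
  have key : (x * (∏ v ∈ t, c (g v) ^ e v) ^ p ^ (m - 1 - j)) ^ p ^ j
      = ∏ v ∈ t, (x * c (g v) ^ p ^ (m - 1 - g v)) ^ (e v * p ^ g v) := by
    rw [mul_pow, ← pow_mul, ← Finset.prod_pow]
    simp only [mul_pow]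
    rw [Finset.prod_mul_distrib, Finset.prod_pow_eq_pow_sum, hsum]
    congr 1
    apply Finset.prod_congr rfl
    intro v hv
    rw [← pow_mul, ← pow_mul]
    congr 1
    have e1 : p ^ (m - 1 - j) * p ^ j = p ^ (m - 1) := by
      rw [← pow_add]; congr 1; omega
    have e2 : p ^ (m - 1 - g v) * p ^ g v = p ^ (m - 1) := by
      rw [← pow_add]; congr 1
      have := hg v hv
      omega
    calc e v * (p ^ (m - 1 - j) * p ^ j) = e v * p ^ (m - 1) := by rw [e1]
      _ = p ^ (m - 1 - g v) * (e v * p ^ g v) := by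
          rw [← e2]; ring
  rw [key]
  have hiff : ∀ z : K, z ∈ Set.range (algebraMap A K) ↔ z ∈ (algebraMap A K).range :=
    fun z => Iff.rfl
  rw [hiff]
  apply Subring.prod_mem
  intro v hv
  apply Subring.pow_mem
  rw [← hiff]
  exact hc (g v) (lt_of_le_of_lt (hg v hv) hj)

end KeyA

section Core

variable {A K : Type*} [CommRing A] [IsDomain A] [UniqueFactorizationMonoid A]
  [Field K] [Algebra A K] [IsFractionRing A K]

theorem core {p : ℕ} [hp : Fact p.Prime] (x y : K) (hx : x ≠ 0) (hy : y ≠ 0) (m : ℕ)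
    (a b : WittVector p K)
    (ha : ∀ j < m, x * a.coeff j ^ p ^ (m - 1 - j) ∈ Set.range (algebraMap A K))
    (hb : ∀ j < m, y * b.coeff j ^ p ^ (m - 1 - j) ∈ Set.range (algebraMap A K)) :
    ∀ j < m, (x * y) * (a * b).coeff j ^ p ^ (m - 1 - j) ∈ Set.range (algebraMap A K) := by
  intro j hj
  have hp1 : 1 < p := hp.out.one_lt
  have hN : (p : ℕ) ^ (m - 1 - j) ≠ 0 := pow_ne_zero _ (by omega)
  have hxy : x * y ≠ 0 := mul_ne_zero hx hy
  rw [WittVector.mul_coeff]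
  show x * y * (aeval (Function.uncurry ![a.coeff, b.coeff]) (WittVector.wittMul p j))
      ^ p ^ (m - 1 - j) ∈ Set.range (algebraMap A K)
  set F : Fin 2 × ℕ → K := Function.uncurry ![a.coeff, b.coeff] with hF
  rw [aeval_def, eval₂_eq]
  apply Finset.sum_induction _ (fun z => x * y * z ^ p ^ (m - 1 - j) ∈ Set.range (algebraMap A K))
  · intro z1 z2 h1 h2
    exact keyS_add hxy hN h1 h2
  · rw [zero_pow hN, mul_zero]
    exact ⟨0, map_zero _⟩
  · intro d hd
    rw [mem_support_iff] at hd
    -- homogeneity facts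
    have hwt : ∀ b' : Fin 2,
        ∑ v ∈ d.support.filter (fun v => v.1 = b'), d v * p ^ v.2 = p ^ j := by
      intro b'
      have := wittMul_isWeightedHomogeneous b' j hd
      rw [Finsupp.weight_apply] at this
      rw [← this, Finsupp.sum, Finset.sum_filter]
      apply Finset.sum_congr rfl
      intro v hv
      by_cases h : v.1 = b' <;> simp [wtb, h]
    -- split the product
    have hsplit : ∏ v ∈ d.support, F v ^ d v
        = (∏ v ∈ d.support.filter (fun v => v.1 = 0), a.coeff v.2 ^ d v)
          * ∏ v ∈ d.support.filter (fun v => v.1 = 1), b.coeff v.2 ^ d v := by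
      rw [← Finset.prod_filter_mul_prod_filter_not d.support (fun v => v.1 = 0)]
      congr 1
      · apply Finset.prod_congr rfl
        intro v hv
        rw [Finset.mem_filter] at hv
        congr 1
        rw [hF]
        show (![a.coeff, b.coeff] v.1) v.2 = _
        rw [hv.2]
        simp
      · apply Finset.prod_congr
        · apply Finset.filter_congr
          intro v _
          revert v
          rintro ⟨v1, v2⟩ -
          fin_cases v1 <;> simp
        · intro v hv
          rw [Finset.mem_filter] at hv
          congr 1
          rw [hF]
          show (![a.coeff, b.coeff] v.1) v.2 = _
          rw [hv.2]
          simp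
    rw [hsplit]
    have hP0 := keyA (A := A) hp1 hj a.coeff ha (d.support.filter (fun v => v.1 = 0))
      Prod.snd (fun v => d v)
      (fun v hv => Finsupp.mem_support_iff.mp (Finset.mem_of_mem_filter v hv)) (hwt 0)
    have hP1 := keyA (A := A) hp1 hj b.coeff hb (d.support.filter (fun v => v.1 = 1))
      Prod.snd (fun v => d v)
      (fun v hv => Finsupp.mem_support_iff.mp (Finset.mem_of_mem_filter v hv)) (hwt 1)
    set P0 := ∏ v ∈ d.support.filter (fun v => v.1 = 0), a.coeff v.2 ^ d v
    set P1 := ∏ v ∈ d.support.filter (fun v => v.1 = 1), b.coeff v.2 ^ d v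
    have hring : x * y * ((algebraMap ℤ K) (coeff d (WittVector.wittMul p j)) * (P0 * P1))
          ^ p ^ (m - 1 - j)
        = ((algebraMap ℤ K) (coeff d (WittVector.wittMul p j))) ^ p ^ (m - 1 - j)
          * ((x * P0 ^ p ^ (m - 1 - j)) * (y * P1 ^ p ^ (m - 1 - j))) := by
      rw [mul_pow, mul_pow]
      ring
    rw [hring]
    have hmem : ∀ z : K, z ∈ Set.range (algebraMap A K) ↔ z ∈ (algebraMap A K).range :=
      fun z => Iff.rfl
    rw [hmem]
    apply Subring.mul_mem
    · apply Subring.pow_mem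
      refine ⟨((coeff d (WittVector.wittMul p j) : ℤ) : A), ?_⟩
      rw [map_intCast]
      simp
    · exact Subring.mul_mem _ ((hmem _).mp hP0) ((hmem _).mp hP1)

end Core



/-- Let `A` be a UFD of characteristic `p` with fraction field `K`,
`x, y ∈ K` nonzero and `m ≥ 1`.  If `a` satisfies `fil(x, m)` and `b` satisfies
`fil(y, m)`, then the Witt vector product `a * b` satisfies `fil(x·y, m)`.  In
particular the Witt vectors satisfying `fil(x, m)` are stable under multiplication by
elements of the image of `𝕎 A` in `𝕎 K`. -/
theorem wittFil_mul
    (p : ℕ) [Fact p.Prime]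
    (A : Type*) [CommRing A] [IsDomain A] [CharP A p] [UniqueFactorizationMonoid A]
    (K : Type*) [Field K] [Algebra A K] [IsFractionRing A K]
    (x y : K) (hx : x ≠ 0) (hy : y ≠ 0) (m : ℕ) (hm : 1 ≤ m) :
    (∀ a b : WittVector p K, WittFil p A x m a → WittFil p A y m b →
      WittFil p A (x * y) m (a * b)) ∧
    (∀ (c : WittVector p A) (a : WittVector p K), WittFil p A x m a →
      WittFil p A x m (WittVector.map (algebraMap A K) c * a)) := by
  constructor
  · intro a b ha hb
    exact core x y hx hy m a b ha hb
  · intro c a ha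
    have h1 : WittFil p A 1 m (WittVector.map (algebraMap A K) c) := by
      intro j hj
      rw [WittVector.map_coeff, one_mul]
      exact ⟨c.coeff j ^ p ^ (m - 1 - j), by rw [map_pow]⟩
    have := core 1 x one_ne_zero hx m (WittVector.map (algebraMap A K) c) a h1 ha
    rw [one_mul] at this
    exact this
end

section
/- Let p be a prime, A an integral domain of characteristic p which is a unique factorization domain, K its fraction field, x ∈ K nonzero, and m ≥ 1. Then a Witt vector a ∈ 𝕎 K satisfies fil(x^(p^(m−1)), m) if and only if for every j < m the element x^(p^j)·(a.coeff j) lies in the image of A in K; equivalently, if and only if every coefficient of index < m of the Witt vector teichmuller(x)·a lies in the image of A. (This is the identity fil_{p^{m−1}D} W_m O_U = W_m O_X(D) = [x^{-1}]·W_m(A).) -/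
open Finset

/-- Over a domain of characteristic zero, the `n`-th coefficient of
`teichmuller x * a` is congruent to `x ^ p ^ n * a.coeff n` modulo `p`. -/
lemma teichmuller_mul_coeff_sub_dvd (p : ℕ) [Fact p.Prime] {S : Type*} [CommRing S]
    [IsDomain S] [CharZero S] (x : S) (a : WittVector p S) (n : ℕ) :
    (p : S) ∣ (WittVector.teichmuller p x * a).coeff n - x ^ p ^ n * a.coeff n := by
  induction n using Nat.strong_induction_on with
  | _ n ih =>
    set c := WittVector.teichmuller p x * a with hc
    have hG : ∀ b : WittVector p S, WittVector.ghostComponent n b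
        = ∑ i ∈ range (n + 1), (p : S) ^ i * b.coeff i ^ p ^ (n - i) := fun b => by
      rw [WittVector.ghostComponent_apply, aeval_wittPolynomial]
    have hg : WittVector.ghostComponent n c
        = x ^ p ^ n * WittVector.ghostComponent n a := by
      rw [hc, map_mul, WittVector.ghostComponent_teichmuller]
    have h1 : ∑ i ∈ range (n + 1), (p : S) ^ i * c.coeff i ^ p ^ (n - i)
        = x ^ p ^ n * ∑ i ∈ range (n + 1), (p : S) ^ i * a.coeff i ^ p ^ (n - i) := by
      rw [← hG, ← hG, hg]
    have e1 := Finset.sum_range_succ (fun i => (p : S) ^ i * c.coeff i ^ p ^ (n - i)) n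
    have e2 := Finset.sum_range_succ (fun i => (p : S) ^ i * a.coeff i ^ p ^ (n - i)) n
    simp only [Nat.sub_self, pow_zero, pow_one] at e1 e2
    have hdvd : (p : S) ^ (n + 1) ∣ (p : S) ^ n * (c.coeff n - x ^ p ^ n * a.coeff n) := by
      have key : (p : S) ^ n * (c.coeff n - x ^ p ^ n * a.coeff n)
          = x ^ p ^ n * (∑ i ∈ range n, (p : S) ^ i * a.coeff i ^ p ^ (n - i))
            - ∑ i ∈ range n, (p : S) ^ i * c.coeff i ^ p ^ (n - i) := by
        have h1' := h1
        rw [e1, e2] at h1'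
        linear_combination h1'
      rw [key, Finset.mul_sum, ← Finset.sum_sub_distrib]
      apply Finset.dvd_sum
      intro i hi
      have hi' : i < n := Finset.mem_range.mp hi
      have hd := dvd_sub_pow_of_dvd_sub (ih i hi') (n - i)
      have hxp : (x ^ p ^ i) ^ p ^ (n - i) = x ^ p ^ n := by
        rw [← pow_mul, ← pow_add, Nat.add_sub_cancel' hi'.le]
      rw [mul_pow, hxp] at hd
      have h3 : x ^ p ^ n * ((p : S) ^ i * a.coeff i ^ p ^ (n - i))
            - (p : S) ^ i * c.coeff i ^ p ^ (n - i)
          = (p : S) ^ i * -(c.coeff i ^ p ^ (n - i) - x ^ p ^ n * a.coeff i ^ p ^ (n - i)) := by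
        ring
      have hsplit : (p : S) ^ (n + 1) = (p : S) ^ i * (p : S) ^ (n - i + 1) := by
        rw [← pow_add]
        congr 1
        omega
      rw [h3, hsplit]
      refine mul_dvd_mul_left _ (dvd_neg.mpr ?_)
      have : ((p : S) ^ (n - i + 1)) ∣ c.coeff i ^ p ^ (n - i)
          - x ^ p ^ n * a.coeff i ^ p ^ (n - i) := by
        have := hd
        push_cast at this
        exact this
      exact this
    obtain ⟨z, hz⟩ := hdvd
    refine ⟨z, ?_⟩
    have hp0 : (p : S) ≠ 0 := Nat.cast_ne_zero.mpr (Fact.out : p.Prime).ne_zero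
    apply mul_left_cancel₀ (pow_ne_zero n hp0)
    linear_combination hz

/-- In characteristic `p`, the `n`-th coefficient of `teichmuller x * a`
is `x ^ p ^ n * a.coeff n`. -/
lemma teichmuller_mul_coeff (p : ℕ) [Fact p.Prime] {R : Type*} [CommRing R] [CharP R p]
    (x : R) (a : WittVector p R) (n : ℕ) :
    (WittVector.teichmuller p x * a).coeff n = x ^ p ^ n * a.coeff n := by
  classical
  set S := MvPolynomial (Option ℕ) ℤ with hS
  let g : S →+* R :=
    (MvPolynomial.aeval (fun o : Option ℕ => o.elim x fun i => a.coeff i)).toRingHom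
  obtain ⟨z, hz⟩ := teichmuller_mul_coeff_sub_dvd p (S := S) (MvPolynomial.X none)
    (WittVector.mk p fun i => MvPolynomial.X (some i)) n
  have hmap : (WittVector.map g)
      (WittVector.teichmuller p (MvPolynomial.X none)
        * WittVector.mk p fun i => MvPolynomial.X (some i))
      = WittVector.teichmuller p x * a := by
    rw [map_mul, WittVector.map_teichmuller]
    congr 1
    · congr 1
      show (MvPolynomial.aeval fun o : Option ℕ => o.elim x fun i => a.coeff i)
        (MvPolynomial.X none) = x
      rw [MvPolynomial.aeval_X]
      rfl
    · ext i
      rw [WittVector.map_coeff]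
      show (MvPolynomial.aeval fun o : Option ℕ => o.elim x fun i => a.coeff i)
        ((WittVector.mk p fun i => MvPolynomial.X (some i)).coeff i) = a.coeff i
      rw [WittVector.coeff_mk, MvPolynomial.aeval_X]
      rfl
  have := congrArg g hz
  rw [map_sub, map_mul, map_mul, map_pow] at this
  rw [← WittVector.map_coeff g, hmap] at this
  have hgx : g (MvPolynomial.X none) = x := by
    show (MvPolynomial.aeval fun o : Option ℕ => o.elim x fun i => a.coeff i)
      (MvPolynomial.X none) = x
    rw [MvPolynomial.aeval_X]
    rfl
  have hga : g ((WittVector.mk p fun i => MvPolynomial.X (some i)).coeff n) = a.coeff n := by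
    show (MvPolynomial.aeval fun o : Option ℕ => o.elim x fun i => a.coeff i)
      ((WittVector.mk p fun i => MvPolynomial.X (some i)).coeff n) = a.coeff n
    rw [WittVector.coeff_mk, MvPolynomial.aeval_X]
    rfl
  have hgp : g (p : S) = 0 := by
    rw [map_natCast]
    exact CharP.cast_eq_zero R p
  rw [hgx, hga, hgp, zero_mul, sub_eq_zero] at this
  exact this

/-- Let `A` be a UFD of characteristic `p` with fraction field `K`,
`x ∈ K` nonzero and `m ≥ 1`.  Then `a ∈ 𝕎 K` satisfies `fil(x^(p^(m-1)), m)` iff for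
every `j < m` the element `x^(p^j) * a.coeff j` lies in the image of `A`; equivalently,
iff every coefficient of index `< m` of `teichmuller x * a` lies in the image of `A`.
(This is `fil_{p^{m-1}D} W_m O_U = W_m O_X(D) = [x⁻¹]·W_m(A)`.) -/
theorem wittFil_pow_iff_teichmuller_mul
    (p : ℕ) [Fact p.Prime]
    (A : Type*) [CommRing A] [IsDomain A] [CharP A p] [UniqueFactorizationMonoid A]
    (K : Type*) [Field K] [Algebra A K] [IsFractionRing A K]
    (x : K) (hx : x ≠ 0) (m : ℕ) (hm : 1 ≤ m) (a : WittVector p K) :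
    (WittFil p A (x ^ p ^ (m - 1)) m a ↔
      ∀ j < m, x ^ p ^ j * a.coeff j ∈ Set.range (algebraMap A K)) ∧
    (WittFil p A (x ^ p ^ (m - 1)) m a ↔
      ∀ j < m, (WittVector.teichmuller p x * a).coeff j ∈ Set.range (algebraMap A K)) := by
  haveI : CharP K p := charP_of_injective_algebraMap (IsFractionRing.injective A K) p
  have hprime : p.Prime := Fact.out
  have heq : ∀ j < m, x ^ p ^ (m - 1) * a.coeff j ^ p ^ (m - 1 - j)
      = (x ^ p ^ j * a.coeff j) ^ p ^ (m - 1 - j) := by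
    intro j hj
    have hj' : j + (m - 1 - j) = m - 1 := by omega
    rw [mul_pow, ← pow_mul, ← pow_add, hj']
  have main : WittFil p A (x ^ p ^ (m - 1)) m a ↔
      ∀ j < m, x ^ p ^ j * a.coeff j ∈ Set.range (algebraMap A K) := by
    constructor
    · intro h j hj
      have h' := h j hj
      rw [heq j hj] at h'
      obtain ⟨c, hc⟩ := h'
      have hint : IsIntegral A ((x ^ p ^ j * a.coeff j) ^ p ^ (m - 1 - j)) :=
        IsIntegrallyClosed.isIntegral_iff.mpr ⟨c, hc⟩
      obtain ⟨y, hy⟩ := IsIntegrallyClosed.exists_algebraMap_eq_of_isIntegral_pow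
        (pow_pos hprime.pos (m - 1 - j)) hint
      exact ⟨y, hy⟩
    · intro h j hj
      rw [heq j hj]
      obtain ⟨c, hc⟩ := h j hj
      exact ⟨c ^ p ^ (m - 1 - j), by rw [map_pow, hc]⟩
  refine ⟨main, main.trans ?_⟩
  constructor <;> intro h j hj <;> have := h j hj
  · rwa [teichmuller_mul_coeff]
  · rwa [teichmuller_mul_coeff] at this
end

section
/- Let p be a prime, A an integral domain of characteristic p which is a unique factorization domain, and K its fraction field. Let ξ_1, …, ξ_r be pairwise non-associated prime elements of A, let n_1, …, n_r be integers, and set x = ∏_t ξ_t^{n_t} and x' = ∏_t ξ_t^{⌊n_t/p⌋} in K. Let m ≥ 2. Then for every a ∈ 𝕎 K: a satisfies fil(x', m−1) if and only if V(F(a)) satisfies fil(x, m), where F : 𝕎 K → 𝕎 K is the coefficientwise Frobenius (the map induced by y ↦ y^p on K) and V is the Verschiebung. (This expresses that for ω ∈ W_{m−1}(K), ω ∈ fil_{D/p} W_{m−1}(K) if and only if p̄(ω) ∈ fil_D W_m(K), where p̄ is the unique map with p = p̄ ∘ R.) -/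
/-! Write `x = x' ^ p * e` with `e = ∏ ξ_t ^ (n_t mod p) ∈ A`. Since `V` shifts coefficients,
`V(F a) ∈ fil(x, m)` says that `(x' a_j ^ p^(m-2-j)) ^ p * e ∈ A` for `j < m - 1`. As `e` is
divisible by no `p`-th power of a prime, a `z ∈ K` with `z ^ p * e ∈ A` already lies in `A`:
write `z = s / t` and peel the prime factors of `t` off `s` one at a time. -/

section UniqueFactorization

variable {M : Type*} [CommMonoidWithZero M]

theorem UniqueFactorizationMonoid.dvd_of_pow_dvd_mul_pow [UniqueFactorizationMonoid M]
    {N : ℕ} (hN : N ≠ 0) {e : M} (he0 : e ≠ 0) (he : ∀ q : M, Prime q → ¬ q ^ N ∣ e)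
    (t : M) {s : M} (h : t ^ N ∣ e * s ^ N) : t ∣ s := by
  induction t using UniqueFactorizationMonoid.induction_on_prime generalizing s with
  | h₁ =>
    rw [zero_pow hN, zero_dvd_iff, mul_eq_zero, pow_eq_zero_iff hN] at h
    exact h.resolve_left he0 ▸ dvd_rfl
  | h₂ u hu => exact hu.dvd
  | h₃ a q _ hq ih =>
    rw [mul_pow] at h
    have hqs : q ∣ s := by
      by_contra hqs
      exact he q hq <| hq.pow_dvd_of_dvd_mul_right N (fun h' => hqs (hq.dvd_of_dvd_pow h'))
        (dvd_of_mul_right_dvd h)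
    obtain ⟨s', rfl⟩ := hqs
    rw [mul_pow, mul_left_comm, mul_dvd_mul_iff_left (pow_ne_zero N hq.ne_zero)] at h
    exact mul_dvd_mul_left q (ih h)

theorem not_pow_dvd_prod_prime_pow [IsCancelMulZero M] {ι : Type*} [Fintype ι] {ξ : ι → M}
    (hprime : ∀ t, Prime (ξ t)) (hassoc : ∀ t t', t ≠ t' → ¬ Associated (ξ t) (ξ t'))
    {N : ℕ} (hN : N ≠ 0) {k : ι → ℕ} (hk : ∀ t, k t < N) {q : M} (hq : Prime q) :
    ¬ q ^ N ∣ ∏ t, ξ t ^ k t := by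
  classical
  intro hdvd
  obtain ⟨t₀, -, hqt⟩ := hq.exists_mem_finset_dvd ((dvd_pow_self q hN).trans hdvd)
  have hq_assoc : Associated q (ξ t₀) :=
    hq.irreducible.associated_of_dvd (hprime t₀).irreducible (hq.dvd_of_dvd_pow hqt)
  have hξ_coprime : ¬ ξ t₀ ∣ ∏ t ∈ Finset.univ.erase t₀, ξ t ^ k t := fun h => by
    obtain ⟨t', ht', hdvd'⟩ := (hprime t₀).exists_mem_finset_dvd h
    exact hassoc t₀ t' (Finset.ne_of_mem_erase ht').symm <|
      (hprime t₀).irreducible.associated_of_dvd (hprime t').irreducible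
        ((hprime t₀).dvd_of_dvd_pow hdvd')
  rw [hq_assoc.pow_pow.dvd_iff_dvd_left, ← Finset.mul_prod_erase _ _ (Finset.mem_univ t₀)]
    at hdvd
  have := (pow_dvd_pow_iff (hprime t₀).ne_zero (hprime t₀).not_isUnit).mp
    ((hprime t₀).pow_dvd_of_dvd_mul_right N hξ_coprime hdvd)
  exact (hk t₀).not_ge this

end UniqueFactorization

theorem IsFractionRing.pow_mul_mem_range_iff {A : Type*} [CommRing A] [IsDomain A]
    [UniqueFactorizationMonoid A] {K : Type*} [Field K] [Algebra A K] [IsFractionRing A K]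
    {N : ℕ} (hN : N ≠ 0) {e : A} (he0 : e ≠ 0) (he : ∀ q : A, Prime q → ¬ q ^ N ∣ e) (z : K) :
    z ^ N * algebraMap A K e ∈ Set.range (algebraMap A K) ↔ z ∈ Set.range (algebraMap A K) := by
  refine ⟨fun ⟨w, hw⟩ => ?_, fun ⟨c, hc⟩ => ⟨c ^ N * e, by rw [map_mul, map_pow, hc]⟩⟩
  obtain ⟨s, t, ht, rfl⟩ := IsFractionRing.div_surjective (A := A) z
  have htK : algebraMap A K t ≠ 0 := IsFractionRing.to_map_ne_zero_of_mem_nonZeroDivisors ht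
  have hdvd : t ^ N ∣ e * s ^ N := ⟨w, IsFractionRing.injective A K <| by
    rw [map_mul, map_mul, map_pow, map_pow, hw, div_pow]
    field_simp⟩
  obtain ⟨c, rfl⟩ := UniqueFactorizationMonoid.dvd_of_pow_dvd_mul_pow hN he0 he t hdvd
  exact ⟨c, by rw [map_mul, mul_div_cancel_left₀ _ htK]⟩

theorem zpow_eq_zpow_fdiv_pow_mul_pow_fmod_s10 {G : Type*} [GroupWithZero G] {y : G} (hy : y ≠ 0)
    (k : ℤ) {d : ℕ} (hd : 0 < d) :
    y ^ k = (y ^ k.fdiv d) ^ d * y ^ (k.fmod d).toNat := by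
  rw [← zpow_natCast (y ^ k.fdiv d), ← zpow_natCast y,
    Int.toNat_of_nonneg (Int.fmod_nonneg_of_pos k (by exact_mod_cast hd)), ← zpow_mul,
    ← zpow_add₀ hy, mul_comm, Int.mul_fdiv_add_fmod]

section Witt

variable {p : ℕ} [Fact p.Prime] {A K : Type*} [CommRing A]

theorem wittFil_verschiebung_iff [CommRing K] [Algebra A K] (x : K) (m : ℕ) (b : WittVector p K) :
    WittFil p A x m (WittVector.verschiebung b) ↔ WittFil p A x (m - 1) b := by
  cases m with
  | zero => simp [WittFil]
  | succ m =>
    rw [Nat.add_sub_cancel]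
    have hexp : ∀ j, m + 1 - 1 - (j + 1) = m - 1 - j := fun j => by omega
    refine ⟨fun h j hj => ?_, fun h j hj => ?_⟩
    · simpa only [WittVector.verschiebung_coeff_succ, hexp] using h (j + 1) (by omega)
    · cases j with
      | zero => exact ⟨0, by simp [(Fact.out : p.Prime).ne_zero]⟩
      | succ j =>
        simpa only [WittVector.verschiebung_coeff_succ, hexp] using h j (by omega)

theorem wittFil_map_frobenius_iff [IsDomain A] [UniqueFactorizationMonoid A] [Field K]
    [Algebra A K] [IsFractionRing A K] (φ : K →+* K) (hφ : ∀ y, φ y = y ^ p)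
    {e : A} (he0 : e ≠ 0) (he : ∀ q : A, Prime q → ¬ q ^ p ∣ e) (y : K) (m : ℕ)
    (b : WittVector p K) :
    WittFil p A (y ^ p * algebraMap A K e) m (WittVector.map φ b) ↔ WittFil p A y m b := by
  refine forall₂_congr fun j _ => ?_
  have hsplit : y ^ p * algebraMap A K e * φ (b.coeff j) ^ p ^ (m - 1 - j) =
      (y * b.coeff j ^ p ^ (m - 1 - j)) ^ p * algebraMap A K e := by
    rw [hφ]; ring
  rw [WittVector.map_coeff, hsplit,
    IsFractionRing.pow_mul_mem_range_iff (Fact.out : p.Prime).ne_zero he0 he]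

end Witt

theorem wittFil_verschiebung_frobenius_iff_general
    (p : ℕ) [Fact p.Prime]
    (A : Type*) [CommRing A] [IsDomain A] [UniqueFactorizationMonoid A]
    (K : Type*) [Field K] [Algebra A K] [IsFractionRing A K]
    (r : ℕ) (ξ : Fin r → A)
    (hprime : ∀ t, Prime (ξ t))
    (hassoc : ∀ t t', t ≠ t' → ¬ Associated (ξ t) (ξ t'))
    (n : Fin r → ℤ)
    (x x' : K)
    (hx : x = ∏ t, (algebraMap A K (ξ t)) ^ (n t))
    (hx' : x' = ∏ t, (algebraMap A K (ξ t)) ^ (Int.fdiv (n t) p))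
    (m : ℕ)
    (φ : K →+* K) (hφ : ∀ y : K, φ y = y ^ p) :
    ∀ a : WittVector p K,
      WittFil p A x' (m - 1) a ↔
      WittFil p A x m (WittVector.verschiebung (WittVector.map φ a)) := by
  have hp : 0 < p := (Fact.out : p.Prime).pos
  set e : A := ∏ t, ξ t ^ ((n t).fmod p).toNat
  have he0 : e ≠ 0 := Finset.prod_ne_zero_iff.mpr fun t _ => pow_ne_zero _ (hprime t).ne_zero
  have he : ∀ q : A, Prime q → ¬ q ^ p ∣ e :=
    fun q => not_pow_dvd_prod_prime_pow hprime hassoc hp.ne' fun t => by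
      have := Int.fmod_lt_of_pos (n t) (Int.natCast_pos.mpr hp)
      omega
  have hxe : x = x' ^ p * algebraMap A K e := by
    simp only [hx, hx', e, map_prod, map_pow, ← Finset.prod_pow, ← Finset.prod_mul_distrib]
    refine Finset.prod_congr rfl fun t _ => zpow_eq_zpow_fdiv_pow_mul_pow_fmod_s10 ?_ _ hp
    exact (map_ne_zero_iff _ (IsFractionRing.injective A K)).mpr (hprime t).ne_zero
  intro a
  rw [wittFil_verschiebung_iff, hxe, wittFil_map_frobenius_iff φ hφ he0 he]

/-- Let `A` be a UFD of characteristic `p` with fraction field `K`,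
`ξ₁, …, ξ_r` pairwise non-associated primes, `n₁, …, n_r ∈ ℤ`, `x = ∏ ξ_t ^ n_t`,
`x' = ∏ ξ_t ^ ⌊n_t/p⌋`, and `m ≥ 2`.  Then for every `a ∈ 𝕎 K`: `a` satisfies
`fil(x', m-1)` iff `V(F(a))` satisfies `fil(x, m)`, where `F` is the coefficientwise
Frobenius (induced by `y ↦ y^p`) and `V` the Verschiebung.  (For `ω ∈ W_{m-1}(K)`,
`ω ∈ fil_{D/p} W_{m-1}(K)` iff `p̄(ω) ∈ fil_D W_m(K)`.) -/
theorem wittFil_verschiebung_frobenius_iff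
    (p : ℕ) [Fact p.Prime]
    (A : Type*) [CommRing A] [IsDomain A] [CharP A p] [UniqueFactorizationMonoid A]
    (K : Type*) [Field K] [Algebra A K] [IsFractionRing A K]
    (r : ℕ) (ξ : Fin r → A)
    (hprime : ∀ t, Prime (ξ t))
    (hassoc : ∀ t t', t ≠ t' → ¬ Associated (ξ t) (ξ t'))
    (n : Fin r → ℤ)
    (x x' : K)
    (hx : x = ∏ t, (algebraMap A K (ξ t)) ^ (n t))
    (hx' : x' = ∏ t, (algebraMap A K (ξ t)) ^ (Int.fdiv (n t) p))
    (m : ℕ) (hm : 2 ≤ m)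
    (φ : K →+* K) (hφ : ∀ y : K, φ y = y ^ p) :
    ∀ a : WittVector p K,
      WittFil p A x' (m - 1) a ↔
      WittFil p A x m (WittVector.verschiebung (WittVector.map φ a)) :=
  wittFil_verschiebung_frobenius_iff_general p A K r ξ hprime hassoc n x x' hx hx' m φ hφ
end

section
/- Let G' be a torsion abelian group, G an abelian group, and β : G' → Hom(G, ℚ/ℤ) an injective homomorphism of abelian groups into the group of additive homomorphisms from G to ℚ/ℤ. Endow ℚ/ℤ with the discrete topology and endow G with the weak topology induced by G', namely the coarsest topology on G for which the map β(f) : G → ℚ/ℤ is continuous for every f ∈ G' (the initial topology with respect to the family (β(f))_{f ∈ G'}). Then β is a bijection from G' onto the group of continuous homomorphisms G → ℚ/ℤ: every additive homomorphism h : G → ℚ/ℤ that is continuous for this topology is of the form h = β(f) for a unique f ∈ G'. -/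
open Topology Filter

/-!
Continuity of `h` for the initial topology means that `ker h` is a neighbourhood of `0`, so it
contains `⋂_{f ∈ t} ker (β f)` for a finite `t ⊆ G'`. Then `h` factors through
`Φ = (β f)_{f ∈ t} : G → (ℚ/ℤ)^t`, and since `ℚ/ℤ` is divisible, hence injective, it extends to
some `ψ : (ℚ/ℤ)^t → ℚ/ℤ`. The coordinates of `Φ` are killed by the orders of the `f ∈ t`, and on
the `n`-torsion of `ℚ/ℤ`, which is cyclic, every endomorphism is multiplication by some `m ∈ ℕ`;
hence `h = ψ ∘ Φ = ∑ m_f • β f = β (∑ m_f • f)`. Uniqueness is the injectivity of `β`.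
-/

lemma exists_finset_of_mem_nhds_zero_iInf_induced {ι G A : Type*} [AddZeroClass G]
    [AddZeroClass A] (f : ι → G →+ A) {U : Set G}
    (hU : U ∈ @nhds G (⨅ i, TopologicalSpace.induced (f i) ⊥) 0) :
    ∃ t : Finset ι, ∀ x, (∀ i ∈ t, f i x = 0) → x ∈ U := by
  let _ : TopologicalSpace A := ⊥
  have _ : DiscreteTopology A := ⟨rfl⟩
  simp only [nhds_iInf, nhds_induced, map_zero, nhds_discrete] at hU
  obtain ⟨t, ht⟩ := (mem_iInf_finite U).1 hU
  refine ⟨t, fun x hx ↦ ?_⟩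
  have : pure x ≤ ⨅ i ∈ t, comap (f i) (pure 0) := by
    simp only [le_iInf_iff, ← map_le_iff_le_comap, map_pure]
    intro i hi
    rw [hx i hi]
  exact this ht

lemma exists_finset_of_continuous_iInf_induced {ι G A B : Type*} [AddZeroClass G]
    [AddZeroClass A] [AddZeroClass B] (f : ι → G →+ A) (h : G →+ B)
    (hh : Continuous[⨅ i, TopologicalSpace.induced (f i) ⊥, ⊥] h) :
    ∃ t : Finset ι, ∀ x, (∀ i ∈ t, f i x = 0) → h x = 0 :=
  let _ : TopologicalSpace G := ⨅ i, TopologicalSpace.induced (f i) ⊥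
  let _ : TopologicalSpace B := ⊥
  have _ : DiscreteTopology B := ⟨rfl⟩
  exists_finset_of_mem_nhds_zero_iInf_induced f <|
    (isOpen_discrete {0}).preimage hh |>.mem_nhds (map_zero h)

namespace AddCircle

variable {𝕜 : Type*} [Field 𝕜] [LinearOrder 𝕜] [IsStrictOrderedRing 𝕜] {p : 𝕜} [Fact (0 < p)]

lemma exists_nsmul_div_eq_of_nsmul_eq_zero {n : ℕ} (hn : n ≠ 0) {u : AddCircle p}
    (hu : n • u = 0) : ∃ k : ℕ, k • ((p / n : 𝕜) : AddCircle p) = u := by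
  obtain ⟨k, -, rfl⟩ := (AddCircle.nsmul_eq_zero_iff (Nat.pos_of_ne_zero hn)).1 hu
  refine ⟨k, ?_⟩
  rw [← AddCircle.coe_nsmul, nsmul_eq_mul]
  congr 1
  ring

lemma exists_apply_eq_nsmul_of_nsmul_eq_zero (c : AddCircle p →+ AddCircle p) {n : ℕ}
    (hn : n ≠ 0) : ∃ m : ℕ, ∀ u : AddCircle p, n • u = 0 → c u = m • u := by
  have hgen : n • ((p / n : 𝕜) : AddCircle p) = 0 := by
    rw [← AddCircle.coe_nsmul, nsmul_eq_mul, mul_div_cancel₀ _ (Nat.cast_ne_zero.2 hn),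
      AddCircle.coe_period]
  obtain ⟨m, hm⟩ := exists_nsmul_div_eq_of_nsmul_eq_zero hn (u := c (p / n : 𝕜)) <| by
    rw [← map_nsmul, hgen, map_zero]
  refine ⟨m, fun u hu ↦ ?_⟩
  obtain ⟨k, rfl⟩ := exists_nsmul_div_eq_of_nsmul_eq_zero hn hu
  rw [map_nsmul, ← hm, smul_comm]

lemma exists_apply_eq_sum_nsmul_of_nsmul_eq_zero {ι : Type*} [Fintype ι]
    (ψ : (ι → AddCircle p) →+ AddCircle p) {n : ι → ℕ} (hn : ∀ i, n i ≠ 0) :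
    ∃ m : ι → ℕ, ∀ a : ι → AddCircle p, (∀ i, n i • a i = 0) → ψ a = ∑ i, m i • a i := by
  classical
  choose m hm using fun i ↦ exists_apply_eq_nsmul_of_nsmul_eq_zero
    (ψ.comp (AddMonoidHom.single (fun _ ↦ AddCircle p) i)) (hn i)
  refine ⟨m, fun a ha ↦ ?_⟩
  conv_lhs => rw [← Finset.univ_sum_single a, map_sum]
  exact Finset.sum_congr rfl fun i _ ↦ hm i (a i) (ha i)

end AddCircle

lemma AddMonoidHom.exists_comp_eq_of_ker_le {G B Q : Type*} [AddCommGroup G] [AddCommGroup B]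
    [AddCommGroup Q] [DivisibleBy Q ℤ] (Φ : G →+ B) (h : G →+ Q) (hker : Φ.ker ≤ h.ker) :
    ∃ ψ : B →+ Q, ψ.comp Φ = h := by
  obtain ⟨ψ, hψ⟩ := (Module.Baer.of_divisible Q).extension_property_addMonoidHom
    (QuotientAddGroup.kerLift Φ) (QuotientAddGroup.kerLift_injective Φ)
    (QuotientAddGroup.lift Φ.ker h hker)
  exact ⟨ψ, AddMonoidHom.ext fun x ↦ DFunLike.congr_fun hψ (x : G ⧸ Φ.ker)⟩

/-- Let `G'` be a torsion abelian group, `G` an abelian group, and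
`β : G' → Hom(G, ℚ/ℤ)` an injective homomorphism.  Endow `ℚ/ℤ` with the discrete
topology and `G` with the weak topology induced by `G'` (the initial topology with
respect to the family `(β f)_{f ∈ G'}`).  Then `β` is a bijection from `G'` onto the
group of continuous homomorphisms `G → ℚ/ℤ`: every additive homomorphism
`h : G → ℚ/ℤ` continuous for this topology equals `β f` for a unique `f ∈ G'`. -/
theorem weak_topology_dual_eq
    (G' G : Type*) [AddCommGroup G'] [AddCommGroup G]
    (htor : AddMonoid.IsTorsion G')
    (β : G' →+ (G →+ AddCircle (1 : ℚ)))
    (hβ : Function.Injective β) :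
    ∀ h : G →+ AddCircle (1 : ℚ),
      Continuous[(⨅ f : G', TopologicalSpace.induced (β f) ⊥), ⊥] (⇑h) →
      ∃! f : G', β f = h := by
  intro h hcont
  obtain ⟨t, ht⟩ := exists_finset_of_continuous_iInf_induced β h hcont
  let Φ : G →+ (t → AddCircle (1 : ℚ)) := AddMonoidHom.pi fun i ↦ β i
  obtain ⟨ψ, hψ⟩ := Φ.exists_comp_eq_of_ker_le h fun x hx ↦
    ht x fun i hi ↦ congr_fun hx ⟨i, hi⟩
  obtain ⟨m, hm⟩ := AddCircle.exists_apply_eq_sum_nsmul_of_nsmul_eq_zero ψ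
    (n := fun i ↦ addOrderOf (i : G')) fun i ↦ (htor i).addOrderOf_pos.ne'
  have hβf : β (∑ i : t, m i • (i : G')) = h := by
    ext x
    have hΦ : ∀ i : t, addOrderOf (i : G') • Φ x i = 0 := fun i ↦ by
      rw [AddMonoidHom.pi_apply, ← AddMonoidHom.nsmul_apply, ← map_nsmul,
        addOrderOf_nsmul_eq_zero, map_zero, AddMonoidHom.zero_apply]
    calc β (∑ i : t, m i • (i : G')) x = ∑ i, m i • Φ x i := by simp [Φ]
      _ = ψ (Φ x) := (hm _ hΦ).symm
      _ = h x := DFunLike.congr_fun hψ x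
  exact ⟨_, hβf, fun f hf ↦ hβ (hf.trans hβf.symm)⟩
end
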